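/- arXiv:1509.03153 — 2 statements merged into one kernel-verified Lean document; each statement's English description precedes it below -/
import Mathlib

section
/- (Elimination formula, strongly connected case without *.) Let G be a strongly connected labeled multidigraph with nodes U_1,…,U_m and edge labels v_e > 0, and consider the linear system Σ_{e : t(e)=U_i} v_e u_{s(e)} − Σ_{e : s(e)=U_i} v_e u_i = 0 for all i, together with u_1 + … + u_m = T. Then this system has the unique solution u_i = T · (Σ_{τ ∈ Θ(U_i)} π(τ)) / (Σ_{j=1}^m Σ_{τ ∈ Θ(U_j)} π(τ)), where Θ(U_i) is the set of spanning trees of G rooted at U_i and π(τ) is the product of the labels of the edges of τ. In particular, all u_i are nonnegative, and positive if T > 0. -/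
/-! The tree weights `W r = ∑_{τ rooted at r} π(τ)` satisfy the balance equations: both the
inflow `∑_{tgt f = i} v f * W (src f)` and the outflow `(∑_{src e = i} v e) * W i` expand, by
adding one edge to a spanning tree, into the sum of `π(g)` over the subgraphs `g` with exactly one
edge out of every node whose cycle passes through `i`. Strong connectivity makes every `W r`
positive, and a maximum principle for `u / W` shows that every solution of the balance equations
is a multiple of `W`; the condition `∑ u i = T` fixes the multiple. -/

/-- A multidigraph: a set of nodes `V`, a set of edges `E`, and source/target maps. -/
structure Multidigraph (V E : Type*) where
  src : E → V
  tgt : E → V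

namespace Multidigraph

variable {V E : Type*}

/-- One-step edge relation using only the edges in `τ`. -/
def Rel (G : Multidigraph V E) (τ : Set E) (a b : V) : Prop :=
  ∃ e ∈ τ, G.src e = a ∧ G.tgt e = b

/-- Undirected (symmetrized) one-step relation. -/
def URel (G : Multidigraph V E) (a b : V) : Prop :=
  G.Rel Set.univ a b ∨ G.Rel Set.univ b a

/-- Node set of the (weakly) connected component containing `v`. -/
def component (G : Multidigraph V E) (v : V) : Set V :=
  {w | Relation.ReflTransGen G.URel v w}

/-- `τ` is a spanning tree of the subgraph of `G` induced on the node set `W`,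
rooted at `r`: all edges stay inside `W`, every non-root node of `W` has exactly
one outgoing edge in `τ`, the root has none, and every node of `W` reaches `r`
through `τ`. -/
def IsSpanningTreeOn (G : Multidigraph V E) (W : Set V) (τ : Finset E) (r : V) : Prop :=
  (∀ e ∈ τ, G.src e ∈ W ∧ G.tgt e ∈ W) ∧
  (∀ v ∈ W, v ≠ r → ∃! e, e ∈ τ ∧ G.src e = v) ∧
  (∀ e ∈ τ, G.src e ≠ r) ∧
  (∀ v ∈ W, Relation.ReflTransGen (G.Rel (τ : Set E)) v r)

/-- Spanning tree of `G` rooted at `r`. -/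
def IsSpanningTree (G : Multidigraph V E) (τ : Finset E) (r : V) : Prop :=
  G.IsSpanningTreeOn Set.univ τ r

/-- A cycle: a nonempty closed directed path with pairwise distinct nodes. -/
def IsCycle (G : Multidigraph V E) (l : List E) : Prop :=
  l ≠ [] ∧ (l.map G.src).Nodup ∧
  l.Chain' (fun a b => G.tgt a = G.src b) ∧
  ∀ h : l ≠ [], G.tgt (l.getLast h) = G.src (l.head h)

def StronglyConnected (G : Multidigraph V E) : Prop :=
  ∀ a b : V, Relation.ReflTransGen (G.Rel Set.univ) a b

def Connected (G : Multidigraph V E) : Prop :=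
  ∀ a b : V, Relation.ReflTransGen G.URel a b

/-- Incidence matrix of a multidigraph. -/
def incidence [DecidableEq V] (G : Multidigraph V E) : Matrix V E ℝ := fun v e =>
  if G.tgt e = v ∧ G.src e ≠ v then 1
  else if G.src e = v ∧ G.tgt e ≠ v then (-1 : ℝ) else 0

end Multidigraph

open scoped Classical

open Finset Relation

theorem Relation.ReflTransGen.exists_rel_notMem_mem {α : Type*} {r : α → α → Prop}
    {S : Set α} {a b : α} (h : ReflTransGen r a b) (ha : a ∉ S) (hb : b ∈ S) :
    ∃ x y, x ∉ S ∧ y ∈ S ∧ r x y := by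
  induction h using ReflTransGen.head_induction_on with
  | refl => exact absurd hb ha
  | @head x y hxy _ ih =>
    by_cases hy : y ∈ S
    · exact ⟨x, y, ha, hy, hxy⟩
    · exact ih hy

theorem Relation.ReflTransGen.mem_of_forall_rel_mem {α : Type*} {r : α → α → Prop}
    {S : Set α} (hS : ∀ a b, r a b → b ∈ S → a ∈ S) {a b : α} (h : ReflTransGen r a b)
    (hb : b ∈ S) : a ∈ S := by
  induction h using ReflTransGen.head_induction_on with
  | refl => exact hb
  | head hxy _ ih => exact hS _ _ hxy ih

namespace Multidigraph

variable {V E : Type*} {G : Multidigraph V E}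

theorem Rel.mono {s t : Set E} (hst : s ⊆ t) {a b : V} (h : G.Rel s a b) : G.Rel t a b :=
  let ⟨e, he, hs, ht⟩ := h
  ⟨e, hst he, hs, ht⟩

theorem reflTransGen_rel_mono {s t : Set E} (hst : s ⊆ t) {a b : V}
    (h : ReflTransGen (G.Rel s) a b) : ReflTransGen (G.Rel t) a b :=
  ReflTransGen.mono (fun _ _ => Rel.mono hst) _ _ h

theorem Rel.eq_of_injOn_src {s : Set E} (hs : s.InjOn G.src) {a b c : V}
    (hab : G.Rel s a b) (hac : G.Rel s a c) : b = c := by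
  obtain ⟨e, he, rfl, rfl⟩ := hab
  obtain ⟨f, hf, hfe, rfl⟩ := hac
  rw [hs he hf hfe.symm]

theorem reflTransGen_rel_src_ne {s : Set E} {r w : V} (h : ReflTransGen (G.Rel s) w r) :
    ReflTransGen (G.Rel {e ∈ s | G.src e ≠ r}) w r := by
  induction h using ReflTransGen.head_induction_on with
  | refl => exact .refl
  | @head a c hac _ ih =>
    by_cases har : a = r
    · rw [har]
    · obtain ⟨e, he, rfl, rfl⟩ := hac
      exact ih.head ⟨e, ⟨he, har⟩, rfl, rfl⟩

theorem reflTransGen_rel_diff_singleton_or {s : Set E} (f : E) {a b : V}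
    (h : ReflTransGen (G.Rel s) a b) :
    ReflTransGen (G.Rel (s \ {f})) a b ∨ ReflTransGen (G.Rel (s \ {f})) a (G.src f) := by
  induction h using ReflTransGen.head_induction_on with
  | refl => exact .inl .refl
  | head hac _ ih =>
    obtain ⟨e, he, rfl, rfl⟩ := hac
    by_cases hef : e = f
    · exact .inr (hef ▸ .refl)
    · exact ih.imp (·.head ⟨e, ⟨he, hef⟩, rfl, rfl⟩) (·.head ⟨e, ⟨he, hef⟩, rfl, rfl⟩)

/-- Along a deterministic relation, the path from `w` to a sink `r` is forced, so it cannot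
return to `w`. -/
theorem not_transGen_rel_self {s : Set E} (hs : s.InjOn G.src) {r : V}
    (hr : ∀ e ∈ s, G.src e ≠ r) {w : V} (hw : ReflTransGen (G.Rel s) w r) :
    ¬ TransGen (G.Rel s) w w := by
  induction hw using ReflTransGen.head_induction_on with
  | refl =>
    intro h
    obtain ⟨_, ⟨e, he, hs, _⟩, _⟩ := TransGen.head'_iff.mp h
    exact hr e he hs
  | @head a c hac _ ih =>
    intro h
    obtain ⟨z, haz, hz⟩ := TransGen.head'_iff.mp h
    obtain rfl := Rel.eq_of_injOn_src hs haz hac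
    exact ih (TransGen.tail' hz hac)

section SpanningTree

variable {W : Set V} {τ : Finset E} {r : V}

theorem IsSpanningTreeOn.injOn_src (h : G.IsSpanningTreeOn W τ r) :
    (τ : Set E).InjOn G.src := fun e he _ hf hef =>
  (h.2.1 _ (h.1 e he).1 (h.2.2.1 e he)).unique ⟨he, rfl⟩ ⟨hf, hef.symm⟩

theorem IsSpanningTreeOn.not_transGen_rel_self (h : G.IsSpanningTreeOn W τ r) {w : V}
    (hw : w ∈ W) : ¬ TransGen (G.Rel τ) w w :=
  Multidigraph.not_transGen_rel_self h.injOn_src h.2.2.1 (h.2.2.2 w hw)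

theorem isSpanningTreeOn_singleton (r : V) : G.IsSpanningTreeOn {r} ∅ r :=
  ⟨by simp, fun _ hv hvr => absurd hv hvr, by simp, fun _ hv => hv ▸ .refl⟩

theorem IsSpanningTreeOn.insert (h : G.IsSpanningTreeOn W τ r) (hr : r ∈ W) {e : E}
    (hsrc : G.src e ∉ W) (htgt : G.tgt e ∈ W) :
    G.IsSpanningTreeOn (insert (G.src e) W) (insert e τ) r := by
  obtain ⟨hin, huniq, hroot, hreach⟩ := h
  have hsub := coe_subset.2 (subset_insert e τ)
  refine ⟨?_, ?_, ?_, ?_⟩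
  · simp only [mem_insert, forall_eq_or_imp, Set.mem_insert_iff, true_or, htgt, or_true,
      and_self, true_and]
    exact fun f hf => ⟨.inr (hin f hf).1, .inr (hin f hf).2⟩
  · rintro w (rfl | hw) hwr
    · refine ⟨e, ⟨mem_insert_self e τ, rfl⟩, ?_⟩
      rintro f ⟨hf, hfs⟩
      exact (mem_insert.1 hf).resolve_right fun hf => hsrc (hfs ▸ (hin f hf).1)
    · obtain ⟨f, ⟨hf, hfs⟩, hfu⟩ := huniq w hw hwr
      refine ⟨f, ⟨mem_insert_of_mem hf, hfs⟩, ?_⟩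
      rintro f' ⟨hf', hfs'⟩
      rcases mem_insert.1 hf' with rfl | hf'
      · exact absurd (hfs' ▸ hw) hsrc
      · exact hfu f' ⟨hf', hfs'⟩
  · simp only [mem_insert, forall_eq_or_imp]
    exact ⟨fun he => hsrc (he ▸ hr), hroot⟩
  · rintro w (rfl | hw)
    · exact .head ⟨e, by simp, rfl, rfl⟩ (reflTransGen_rel_mono hsub (hreach _ htgt))
    · exact reflTransGen_rel_mono hsub (hreach w hw)

/-- A node set of maximal size carrying a spanning tree rooted at `r` is everything: otherwise
an edge entering it from outside extends the tree. -/
theorem exists_isSpanningTree [Finite V] (hsc : G.StronglyConnected) (r : V) :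
    ∃ τ : Finset E, G.IsSpanningTree τ r := by
  have := Fintype.ofFinite V
  obtain ⟨S, hS, hmax⟩ := exists_max_image
    (univ.filter fun S : Finset V => r ∈ S ∧ ∃ τ, G.IsSpanningTreeOn S τ r) card
    ⟨{r}, mem_filter.2 ⟨mem_univ _, mem_singleton_self r, ∅,
      by simpa using isSpanningTreeOn_singleton r⟩⟩
  obtain ⟨hr, τ, hτ⟩ := (mem_filter.1 hS).2
  by_cases hSu : (S : Set V) = Set.univ
  · exact ⟨τ, by rwa [IsSpanningTree, ← hSu]⟩
  obtain ⟨x, hx⟩ := (Set.ne_univ_iff_exists_notMem _).1 hSu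
  obtain ⟨_, _, hsrc, htgt, e, -, rfl, rfl⟩ :=
    (hsc x r).exists_rel_notMem_mem (S := (S : Set V)) hx hr
  have := hmax (insert (G.src e) S) (mem_filter.2 ⟨mem_univ _, mem_insert_of_mem hr,
    insert e τ, by simpa using hτ.insert hr hsrc htgt⟩)
  rw [card_insert_of_notMem hsrc] at this
  omega

end SpanningTree

section Unicyclic

variable {g σ : Finset E} {i : V}

variable (G) in
/-- A spanning tree rooted at `i` together with one edge out of `i`; equivalently, a subgraph
with exactly one edge out of every node, whose unique cycle passes through `i`. -/
def IsUnicyclicThrough (i : V) (g : Finset E) : Prop :=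
  (∀ w, ∃! e, e ∈ g ∧ G.src e = w) ∧ ∀ w, ReflTransGen (G.Rel g) w i

theorem IsUnicyclicThrough.trans {j : V} (hg : G.IsUnicyclicThrough i g)
    (hij : ReflTransGen (G.Rel g) i j) : G.IsUnicyclicThrough j g :=
  ⟨hg.1, fun w => (hg.2 w).trans hij⟩

theorem isSpanningTree_erase (hfun : ∀ w, ∃! e, e ∈ g ∧ G.src e = w) {f : E} (hf : f ∈ g)
    (hreach : ∀ w, ReflTransGen (G.Rel g) w (G.src f)) :
    G.IsSpanningTree (g.erase f) (G.src f) := by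
  refine ⟨fun _ _ => ⟨trivial, trivial⟩, fun w _ hw => ?_, fun e he hes => ?_, fun w _ => ?_⟩
  · obtain ⟨e, ⟨he, rfl⟩, heu⟩ := hfun w
    exact ⟨e, ⟨mem_erase.2 ⟨fun h => hw (h ▸ rfl), he⟩, rfl⟩,
      fun e' ⟨he', hes'⟩ => heu e' ⟨mem_of_mem_erase he', hes'⟩⟩
  · exact (mem_erase.1 he).1 ((hfun _).unique ⟨mem_of_mem_erase he, hes⟩ ⟨hf, rfl⟩)
  · refine reflTransGen_rel_mono ?_ (reflTransGen_rel_src_ne (hreach w))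
    rintro e ⟨he, hes⟩
    exact mem_erase.2 ⟨fun h => hes (h ▸ rfl), he⟩

theorem IsSpanningTree.notMem {f : E} (hσ : G.IsSpanningTree σ (G.src f)) : f ∉ σ :=
  fun hf => hσ.2.2.1 f hf rfl

theorem IsSpanningTree.isUnicyclicThrough_insert {f : E} (hσ : G.IsSpanningTree σ (G.src f)) :
    G.IsUnicyclicThrough (G.src f) (insert f σ) := by
  refine ⟨fun w => ?_, fun w => reflTransGen_rel_mono (coe_subset.2 (subset_insert f σ))
    (hσ.2.2.2 w trivial)⟩
  by_cases hw : w = G.src f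
  · subst hw
    exact ⟨f, ⟨mem_insert_self f σ, rfl⟩, fun e ⟨he, hes⟩ =>
      (mem_insert.1 he).resolve_right fun he => hσ.2.2.1 e he hes⟩
  · obtain ⟨e, ⟨he, hes⟩, heu⟩ := hσ.2.1 w trivial hw
    refine ⟨e, ⟨mem_insert_of_mem he, hes⟩, fun e' ⟨he', hes'⟩ => ?_⟩
    rcases mem_insert.1 he' with rfl | he'
    · exact absurd hes'.symm hw
    · exact heu e' ⟨he', hes'⟩

/-- If `f₁ ≠ f₂`, the path from `tgt f₁` to `src f₁` in `σ₁` either stays in `σ₂` and closes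
a cycle there with `f₁`, or passes through `f₂` and closes a cycle in `σ₁`. -/
theorem IsSpanningTree.eq_of_insert_eq {f₁ f₂ : E} {σ₁ σ₂ : Finset E}
    (h₁ : G.IsSpanningTree σ₁ (G.src f₁)) (h₂ : G.IsSpanningTree σ₂ (G.src f₂))
    (ht : G.tgt f₁ = G.tgt f₂) (heq : insert f₁ σ₁ = insert f₂ σ₂) : f₁ = f₂ := by
  by_contra hne
  have hf₂ : f₂ ∈ σ₁ :=
    (mem_insert.1 (heq ▸ mem_insert_self f₂ σ₂)).resolve_left (Ne.symm hne)
  have hf₁ : f₁ ∈ σ₂ := (mem_insert.1 (heq ▸ mem_insert_self f₁ σ₁)).resolve_left hne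
  rcases reflTransGen_rel_diff_singleton_or f₂ (h₁.2.2.2 (G.tgt f₁) trivial) with h | h
  · have hsub : (σ₁ : Set E) \ {f₂} ⊆ σ₂ := fun e ⟨he, hef⟩ =>
      (mem_insert.1 (heq ▸ mem_insert_of_mem he)).resolve_left hef
    exact h₂.not_transGen_rel_self trivial
      (TransGen.tail' (reflTransGen_rel_mono hsub h) ⟨f₁, hf₁, rfl, rfl⟩)
  · exact h₁.not_transGen_rel_self trivial
      (TransGen.tail' (reflTransGen_rel_mono Set.sdiff_subset h) ⟨f₂, hf₂, rfl, ht.symm⟩)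

variable [Fintype E] {R : Type*} [CommSemiring R] (v : E → R)

variable (G) in
noncomputable def treeWeight (r : V) : R :=
  ∑ τ ∈ univ.filter (fun τ : Finset E => G.IsSpanningTree τ r), ∏ e ∈ τ, v e

theorem sum_mul_treeWeight_src_eq {F : Finset E}
    (hmaps : ∀ f ∈ F, ∀ σ, G.IsSpanningTree σ (G.src f) → G.IsUnicyclicThrough i (insert f σ))
    (hinj : ∀ f₁ ∈ F, ∀ f₂ ∈ F, ∀ σ₁ σ₂, G.IsSpanningTree σ₁ (G.src f₁) →
      G.IsSpanningTree σ₂ (G.src f₂) → insert f₁ σ₁ = insert f₂ σ₂ → f₁ = f₂)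
    (hsurj : ∀ g, G.IsUnicyclicThrough i g →
      ∃ f ∈ F, f ∈ g ∧ G.IsSpanningTree (g.erase f) (G.src f)) :
    ∑ f ∈ F, v f * G.treeWeight v (G.src f) =
      ∑ g ∈ univ.filter (G.IsUnicyclicThrough i), ∏ e ∈ g, v e := by
  simp only [treeWeight, mul_sum]
  rw [sum_sigma']
  refine sum_bij (fun p _ => insert p.1 p.2) ?_ ?_ ?_ ?_
  · rintro ⟨f, σ⟩ hp
    simp only [mem_sigma, mem_filter, mem_univ, true_and] at hp
    exact mem_filter.2 ⟨mem_univ _, hmaps f hp.1 σ hp.2⟩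
  · rintro ⟨f₁, σ₁⟩ hp₁ ⟨f₂, σ₂⟩ hp₂ (heq : insert f₁ σ₁ = insert f₂ σ₂)
    simp only [mem_sigma, mem_filter, mem_univ, true_and] at hp₁ hp₂
    obtain rfl := hinj f₁ hp₁.1 f₂ hp₂.1 σ₁ σ₂ hp₁.2 hp₂.2 heq
    rw [← erase_insert hp₁.2.notMem, ← erase_insert hp₂.2.notMem, heq]
  · intro g hg
    obtain ⟨f, hF, hf, hσ⟩ := hsurj g (mem_filter.1 hg).2
    exact ⟨⟨f, g.erase f⟩, by simp [hF, hσ], insert_erase hf⟩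
  · rintro ⟨f, σ⟩ hp
    simp only [mem_sigma, mem_filter, mem_univ, true_and] at hp
    exact (prod_insert hp.2.notMem).symm

theorem sum_src_mul_treeWeight (i : V) :
    (∑ e ∈ univ.filter (fun e => G.src e = i), v e) * G.treeWeight v i =
      ∑ g ∈ univ.filter (G.IsUnicyclicThrough i), ∏ e ∈ g, v e := by
  rw [sum_mul]
  calc _ = ∑ f ∈ univ.filter (fun e => G.src e = i), v f * G.treeWeight v (G.src f) :=
        sum_congr rfl fun f hf => by rw [(mem_filter.1 hf).2]
    _ = _ := by
      refine sum_mul_treeWeight_src_eq v (fun f hf σ hσ => ?_)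
        (fun f₁ hf₁ f₂ hf₂ σ₁ σ₂ h₁ _ heq => ?_) fun g hg => ?_
      · exact (mem_filter.1 hf).2 ▸ hσ.isUnicyclicThrough_insert
      · refine ((mem_insert.1 (heq ▸ mem_insert_self f₂ σ₂)).resolve_right fun h => ?_).symm
        exact h₁.2.2.1 f₂ h ((mem_filter.1 hf₂).2.trans (mem_filter.1 hf₁).2.symm)
      · obtain ⟨e, ⟨he, hes⟩, -⟩ := hg.1 i
        exact ⟨e, mem_filter.2 ⟨mem_univ _, hes⟩, he, isSpanningTree_erase hg.1 he (hes ▸ hg.2)⟩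

theorem sum_tgt_mul_treeWeight (i : V) :
    ∑ f ∈ univ.filter (fun e => G.tgt e = i), v f * G.treeWeight v (G.src f) =
      ∑ g ∈ univ.filter (G.IsUnicyclicThrough i), ∏ e ∈ g, v e := by
  refine sum_mul_treeWeight_src_eq v (fun f hf σ hσ => ?_)
    (fun f₁ hf₁ f₂ hf₂ _ _ h₁ h₂ => h₁.eq_of_insert_eq h₂
      ((mem_filter.1 hf₁).2.trans (mem_filter.1 hf₂).2.symm)) fun g hg => ?_
  · exact hσ.isUnicyclicThrough_insert.trans
      (.single ⟨f, mem_insert_self f σ, rfl, (mem_filter.1 hf).2⟩)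
  · obtain ⟨e₀, ⟨he₀, hs₀⟩, -⟩ := hg.1 i
    have hcycle : TransGen (G.Rel g) i i := .head' ⟨e₀, he₀, hs₀, rfl⟩ (hg.2 (G.tgt e₀))
    obtain ⟨_, hix, f, hf, rfl, hft⟩ := TransGen.tail'_iff.1 hcycle
    exact ⟨f, mem_filter.2 ⟨mem_univ _, hft⟩, hf,
      isSpanningTree_erase hg.1 hf fun w => (hg.2 w).trans hix⟩

end Unicyclic

section SteadyState

variable [Fintype E]

variable (G) in
def IsSteadyState {R : Type*} [Semiring R] (v : E → R) (u : V → R) : Prop :=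
  ∀ i, ∑ e ∈ univ.filter (fun e => G.tgt e = i), v e * u (G.src e) =
    (∑ e ∈ univ.filter (fun e => G.src e = i), v e) * u i

theorem isSteadyState_treeWeight {R : Type*} [CommSemiring R] (v : E → R) :
    G.IsSteadyState v (G.treeWeight v) := fun i => by
  rw [sum_tgt_mul_treeWeight, sum_src_mul_treeWeight]

theorem IsSteadyState.const_mul {R : Type*} [CommSemiring R] {v : E → R} {u : V → R}
    (hu : G.IsSteadyState v u) (c : R) : G.IsSteadyState v (fun i => c * u i) := fun i => by
  simp only [mul_left_comm _ c, ← mul_sum, hu i]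

theorem IsSteadyState.sub {R : Type*} [CommRing R] {v : E → R} {u w : V → R}
    (hu : G.IsSteadyState v u) (hw : G.IsSteadyState v w) :
    G.IsSteadyState v (fun i => u i - w i) := fun i => by
  simp only [mul_sub, sum_sub_distrib, hu i, hw i]

variable {K : Type*} [Field K] [LinearOrder K] [IsStrictOrderedRing K] {v : E → K}

theorem treeWeight_pos [Finite V] (hsc : G.StronglyConnected) (hv : ∀ e, 0 < v e) (r : V) :
    0 < G.treeWeight v r := by
  obtain ⟨τ, hτ⟩ := exists_isSpanningTree hsc r
  exact sum_pos (fun τ _ => prod_pos fun e _ => hv e) ⟨τ, mem_filter.2 ⟨mem_univ _, hτ⟩⟩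

/-- Strong maximum principle: a zero of a nonnegative steady state propagates backwards along
edges, since the inflow `∑ v e * d (src e)` into it vanishes termwise. -/
theorem IsSteadyState.eq_zero_of_nonneg (hsc : G.StronglyConnected) (hv : ∀ e, 0 < v e)
    {d : V → K} (hd : G.IsSteadyState v d) (hd0 : ∀ j, 0 ≤ d j) {i : V} (hi : d i = 0)
    (j : V) : d j = 0 := by
  refine (hsc j i).mem_of_forall_rel_mem (S := {j | d j = 0}) ?_ hi
  rintro _ _ ⟨e, -, rfl, rfl⟩ (hb : d _ = 0)
  have hinflow : ∑ f ∈ univ.filter (fun f => G.tgt f = G.tgt e), v f * d (G.src f) = 0 := by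
    rw [hd, hb, mul_zero]
  have := (sum_eq_zero_iff_of_nonneg fun f _ => mul_nonneg (hv f).le (hd0 _)).1 hinflow e
    (mem_filter.2 ⟨mem_univ _, rfl⟩)
  exact (mul_eq_zero.1 this).resolve_left (hv e).ne'

/-- Take `c = max (u / w)`: then `c * w - u` is a nonnegative steady state vanishing somewhere. -/
theorem IsSteadyState.exists_eq_const_mul [Finite V] [Nonempty V] (hsc : G.StronglyConnected)
    (hv : ∀ e, 0 < v e) {u w : V → K} (hu : G.IsSteadyState v u) (hw : G.IsSteadyState v w)
    (hw_pos : ∀ i, 0 < w i) : ∃ c, ∀ i, u i = c * w i := by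
  have := Fintype.ofFinite V
  obtain ⟨i₀, -, hmax⟩ := exists_max_image univ (fun j => u j / w j) univ_nonempty
  set c := u i₀ / w i₀
  have hd0 (j : V) : 0 ≤ c * w j - u j := by
    have := hmax j (mem_univ j)
    rw [div_le_iff₀ (hw_pos j)] at this
    linarith
  have hi₀ : c * w i₀ - u i₀ = 0 := by rw [div_mul_cancel₀ _ (hw_pos i₀).ne', sub_self]
  refine ⟨c, fun j => ?_⟩
  linarith [((hw.const_mul c).sub hu).eq_zero_of_nonneg hsc hv hd0 hi₀ j]

theorem isSteadyState_and_sum_eq_iff [Fintype V] [Nonempty V] (hsc : G.StronglyConnected)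
    (hv : ∀ e, 0 < v e) (T : K) (u : V → K) :
    G.IsSteadyState v u ∧ ∑ i, u i = T ↔
      ∀ i, u i = T * G.treeWeight v i / ∑ j, G.treeWeight v j := by
  have hD : ∑ j, G.treeWeight v j ≠ 0 :=
    (sum_pos (fun j _ => treeWeight_pos hsc hv j) univ_nonempty).ne'
  constructor
  · rintro ⟨hu, rfl⟩ i
    obtain ⟨c, hc⟩ := hu.exists_eq_const_mul hsc hv (isSteadyState_treeWeight v)
      (treeWeight_pos hsc hv)
    simp only [hc, ← mul_sum]
    field_simp
  · intro hu
    obtain rfl : u = fun i => (T / ∑ j, G.treeWeight v j) * G.treeWeight v i := by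
      ext i; rw [hu i]; ring
    exact ⟨(isSteadyState_treeWeight v).const_mul _, by rw [← mul_sum, div_mul_cancel₀ _ hD]⟩

end SteadyState

end Multidigraph

/-- Elimination formula, strongly connected case without `*`:
the steady-state equations together with `Σ u_i = T` have the unique solution
given by the Markov-chain tree formula; the solution is nonnegative when
`T ≥ 0` and positive when `T > 0`. -/
theorem stmt15 {V E : Type} [Fintype V] [Fintype E] [Nonempty V]
    (G : Multidigraph V E) (hsc : G.StronglyConnected)
    (v : E → ℝ) (hv : ∀ e, 0 < v e) (T : ℝ) :
    (∀ u : V → ℝ,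
      ((∀ i : V,
          (∑ e ∈ Finset.univ.filter (fun e => G.tgt e = i), v e * u (G.src e))
            - (∑ e ∈ Finset.univ.filter (fun e => G.src e = i), v e) * u i = 0) ∧
        (∑ i : V, u i) = T)
      ↔ ∀ i : V, u i =
          T * (∑ τ ∈ Finset.univ.filter (fun τ : Finset E => G.IsSpanningTree τ i),
                ∏ e ∈ τ, v e)
            / (∑ j : V, ∑ τ ∈ Finset.univ.filter (fun τ : Finset E => G.IsSpanningTree τ j),
                ∏ e ∈ τ, v e)) ∧
    (0 ≤ T → ∀ i : V,
      0 ≤ T * (∑ τ ∈ Finset.univ.filter (fun τ : Finset E => G.IsSpanningTree τ i),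
                ∏ e ∈ τ, v e)
            / (∑ j : V, ∑ τ ∈ Finset.univ.filter (fun τ : Finset E => G.IsSpanningTree τ j),
                ∏ e ∈ τ, v e)) ∧
    (0 < T → ∀ i : V,
      0 < T * (∑ τ ∈ Finset.univ.filter (fun τ : Finset E => G.IsSpanningTree τ i),
                ∏ e ∈ τ, v e)
            / (∑ j : V, ∑ τ ∈ Finset.univ.filter (fun τ : Finset E => G.IsSpanningTree τ j),
                ∏ e ∈ τ, v e)) := by
  have hW := Multidigraph.treeWeight_pos hsc hv
  have hD : 0 < ∑ j, G.treeWeight v j := Finset.sum_pos (fun j _ => hW j) Finset.univ_nonempty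
  simp only [sub_eq_zero]
  exact ⟨Multidigraph.isSteadyState_and_sum_eq_iff hsc hv T,
    fun hT i => div_nonneg (mul_nonneg hT (hW i).le) hD.le,
    fun hT i => div_pos (mul_pos hT (hW i)) hD⟩
end

section
/- (Fully standard vanishing characterization.) Assume the kinetics κ is fully standard and U-linear, let σ ∈ Δ be a cycle of G_U all of whose edge labels are positive at x (i.e., supp(y_{r̃_σ}) ⊆ supp(x)). Then Π(σ)(x) = Σ_{γ∈Γ(σ)} π(γ)(x) = 0 if and only if φ_j(x) = 0 for every j such that U_j is a node of σ, where φ_j(x) = q_{H(j)}(x) Σ_{τ∈Θ(U_j)} π(τ)(x). -/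
open scoped Classical

/-!
A sum of products of nonnegative labels vanishes iff each product has a zero factor, and
`q_j > 0`, so both sides say that every edge set of a family contains a zero-labelled edge.
The nontrivial direction reroutes a spanning tree `τ` rooted at `j = s(e)` along `σ`: letting
every node of `σ` other than `j` use its `σ`-edge gives a spanning tree `τ̂` rooted at `j` with
`τ̂ ∪ {e} ∈ Γ(σ)` and `τ̂ ⊆ τ ∪ σ`. The labels along `σ` are positive, so the zero-labelled
edge of `τ̂ ∪ {e}` lies in `τ`.
-/

theorem Finset.sum_prod_eq_zero_iff_of_nonneg {α R : Type*} [CommSemiring R] [PartialOrder R]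
    [IsOrderedRing R] [NoZeroDivisors R] [Nontrivial R] {s : Finset (Finset α)} {ℓ : α → R}
    (hℓ : ∀ a, 0 ≤ ℓ a) :
    ∑ γ ∈ s, ∏ f ∈ γ, ℓ f = 0 ↔ ∀ γ ∈ s, ∃ f ∈ γ, ℓ f = 0 := by
  simp only [Finset.sum_eq_zero_iff_of_nonneg fun γ _ => Finset.prod_nonneg fun f _ => hℓ f,
    Finset.prod_eq_zero_iff]

namespace Multidigraph

variable {V E : Type*} (G : Multidigraph V E)

theorem reflTransGen_rel_mono_s18 {S T : Set E} (h : S ⊆ T) {a b : V}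
    (hab : Relation.ReflTransGen (G.Rel S) a b) : Relation.ReflTransGen (G.Rel T) a b :=
  Relation.ReflTransGen.mono (fun _ _ ⟨e, he, hs, ht⟩ => ⟨e, h he, hs, ht⟩) _ _ hab

theorem reflTransGen_rel_sep_src_ne {S : Set E} {a j : V}
    (h : Relation.ReflTransGen (G.Rel S) a j) :
    Relation.ReflTransGen (G.Rel {f ∈ S | G.src f ≠ j}) a j := by
  induction h using Relation.ReflTransGen.head_induction_on with
  | refl => exact .refl
  | @head a _ hab _ ih =>
    by_cases haj : a = j
    · rw [haj]
    · obtain ⟨f, hf, rfl, hft⟩ := hab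
      exact .head ⟨f, ⟨hf, haj⟩, rfl, hft⟩ ih

theorem reflTransGen_src_head_src {L : List E} (hL : L.IsChain fun a b => G.tgt a = G.src b)
    (hne : L ≠ []) :
    ∀ e ∈ L, Relation.ReflTransGen (G.Rel {f | f ∈ L}) (G.src (L.head hne)) (G.src e) :=
  (List.IsChain.iff_mem.1 hL).induction (fun e => Relation.ReflTransGen _ _ (G.src e)) _
    (fun x _ ⟨hx, _, hxy⟩ h => h.tail ⟨x, hx, rfl, hxy⟩) fun _ => .refl

theorem reflTransGen_src_tgt_getLast {L : List E} (hL : L.IsChain fun a b => G.tgt a = G.src b)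
    (hne : L ≠ []) :
    ∀ e ∈ L, Relation.ReflTransGen (G.Rel {f | f ∈ L}) (G.src e) (G.tgt (L.getLast hne)) :=
  (List.IsChain.iff_mem.1 hL).backwards_induction
    (fun e => Relation.ReflTransGen _ (G.src e) _) _
    (fun x _ ⟨hx, _, hxy⟩ h => h.head ⟨x, hx, rfl, hxy⟩)
    fun _ => .single ⟨_, List.getLast_mem _, rfl, rfl⟩

namespace IsCycle

variable {G} {σ : List E}

theorem injOn_src (hσ : G.IsCycle σ) : Set.InjOn G.src {f | f ∈ σ} :=
  fun _ hf _ hg => List.inj_on_of_nodup_map hσ.2.1 hf hg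

theorem reflTransGen_src (hσ : G.IsCycle σ) {f g : E} (hf : f ∈ σ) (hg : g ∈ σ) :
    Relation.ReflTransGen (G.Rel {x | x ∈ σ}) (G.src f) (G.src g) := by
  have hlast := G.reflTransGen_src_tgt_getLast hσ.2.2.1 hσ.1 f hf
  rw [hσ.2.2.2 hσ.1] at hlast
  exact hlast.trans (G.reflTransGen_src_head_src hσ.2.2.1 hσ.1 g hg)

theorem src_tgt_mem_component (hσ : G.IsCycle σ) {f : E} (hf : f ∈ σ) :
    G.src f ∈ G.component (G.src (σ.head hσ.1)) ∧
      G.tgt f ∈ G.component (G.src (σ.head hσ.1)) := by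
  have hsrc : G.src f ∈ G.component (G.src (σ.head hσ.1)) :=
    Relation.ReflTransGen.mono (fun _ _ ⟨e, _, hs, ht⟩ => Or.inl ⟨e, trivial, hs, ht⟩) _ _
      (hσ.reflTransGen_src (List.head_mem hσ.1) hf)
  exact ⟨hsrc, hsrc.tail (Or.inl ⟨f, trivial, rfl, rfl⟩)⟩

end IsCycle

variable {W : Set V} {σ : List E} {τ : Finset E} {j : V}

noncomputable def cycleReroute (σ : List E) (τ : Finset E) (j : V) : Finset E :=
  {f ∈ τ | G.src f ∉ σ.map G.src} ∪ {f ∈ σ.toFinset | G.src f ≠ j}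

theorem mem_cycleReroute {f : E} :
    f ∈ G.cycleReroute σ τ j ↔ f ∈ τ ∧ G.src f ∉ σ.map G.src ∨ f ∈ σ ∧ G.src f ≠ j := by
  simp [cycleReroute]

theorem reflTransGen_cycleReroute (hσ : G.IsCycle σ) (hj : j ∈ σ.map G.src) {v : V}
    (hv : Relation.ReflTransGen (G.Rel τ) v j) :
    Relation.ReflTransGen (G.Rel (G.cycleReroute σ τ j)) v j := by
  have hcycle : ∀ v ∈ σ.map G.src, Relation.ReflTransGen (G.Rel (G.cycleReroute σ τ j)) v j := by
    intro v hv
    obtain ⟨f, hf, rfl⟩ := List.mem_map.1 hv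
    obtain ⟨e, he, rfl⟩ := List.mem_map.1 hj
    exact G.reflTransGen_rel_mono_s18 (fun g hg => G.mem_cycleReroute.2 (Or.inr hg))
      (G.reflTransGen_rel_sep_src_ne (hσ.reflTransGen_src hf he))
  induction hv using Relation.ReflTransGen.head_induction_on with
  | refl => exact .refl
  | @head a _ hab _ ih =>
    by_cases ha : a ∈ σ.map G.src
    · exact hcycle a ha
    · obtain ⟨f, hf, rfl, hft⟩ := hab
      exact .head ⟨f, G.mem_cycleReroute.2 (Or.inl ⟨hf, ha⟩), rfl, hft⟩ ih

theorem existsUnique_src_cycleReroute (hσ : G.IsCycle σ) (hτ : G.IsSpanningTreeOn W τ j)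
    {v : V} (hvW : v ∈ W) (hvj : v ≠ j) :
    ∃! e, e ∈ G.cycleReroute σ τ j ∧ G.src e = v := by
  by_cases hv : v ∈ σ.map G.src
  · obtain ⟨g, hg, rfl⟩ := List.mem_map.1 hv
    refine ⟨g, ⟨G.mem_cycleReroute.2 (Or.inr ⟨hg, hvj⟩), rfl⟩, ?_⟩
    rintro f ⟨hf, hfg⟩
    rcases G.mem_cycleReroute.1 hf with ⟨-, hfσ⟩ | ⟨hfσ, -⟩
    · exact absurd (hfg ▸ hv) hfσ
    · exact hσ.injOn_src hfσ hg hfg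
  · obtain ⟨t, ⟨htτ, rfl⟩, hut⟩ := hτ.2.1 v hvW hvj
    refine ⟨t, ⟨G.mem_cycleReroute.2 (Or.inl ⟨htτ, hv⟩), rfl⟩, ?_⟩
    rintro f ⟨hf, hft⟩
    rcases G.mem_cycleReroute.1 hf with ⟨hfτ, -⟩ | ⟨hfσ, -⟩
    · exact hut f ⟨hfτ, hft⟩
    · exact absurd (hft ▸ List.mem_map_of_mem hfσ) hv

theorem isSpanningTreeOn_cycleReroute (hσ : G.IsCycle σ)
    (hσW : ∀ f ∈ σ, G.src f ∈ W ∧ G.tgt f ∈ W) (hj : j ∈ σ.map G.src)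
    (hτ : G.IsSpanningTreeOn W τ j) : G.IsSpanningTreeOn W (G.cycleReroute σ τ j) j :=
  ⟨fun f hf => (G.mem_cycleReroute.1 hf).elim (fun h => hτ.1 f h.1) fun h => hσW f h.1,
    fun _ hvW hvj => G.existsUnique_src_cycleReroute hσ hτ hvW hvj,
    fun f hf => (G.mem_cycleReroute.1 hf).elim (fun h => hτ.2.2.1 f h.1) And.right,
    fun v hvW => G.reflTransGen_cycleReroute hσ hj (hτ.2.2.2 v hvW)⟩

end Multidigraph

/-- Fully standard vanishing characterization: for a cycle `σ`
of the labeled multidigraph `G_U` with nonnegative labels that are positive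
along `σ`, `Π(σ) = 0` if and only if `φ_j = 0` for every node `j` of `σ`,
where `φ_j = q_j · Σ_{τ ∈ Θ(j)} π(τ)` and `q_j > 0`. -/
theorem stmt18 {V E : Type} [Fintype V] [Fintype E] (G : Multidigraph V E)
    (ℓ : E → ℝ) (hℓ : ∀ e, 0 ≤ ℓ e)
    (σ : List E) (hσ : G.IsCycle σ)
    (hpos : ∀ e ∈ σ, 0 < ℓ e)
    (W : Set V) (hW : W = G.component (G.src (σ.head hσ.1)))
    (q : V → ℝ) (hq : ∀ j, 0 < q j) :
    ((∑ γ ∈ Finset.univ.filter (fun γ : Finset E =>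
          ∃ e ∈ σ, ∃ τ : Finset E, G.IsSpanningTreeOn W τ (G.src e) ∧
            (∀ f ∈ σ, f ≠ e → f ∈ τ) ∧ γ = insert e τ),
        ∏ f ∈ γ, ℓ f) = 0)
      ↔ (∀ j : V, (∃ e ∈ σ, G.src e = j) →
          q j * (∑ τ ∈ Finset.univ.filter
              (fun τ : Finset E => G.IsSpanningTreeOn W τ j),
            ∏ f ∈ τ, ℓ f) = 0) := by
  have hσW : ∀ f ∈ σ, G.src f ∈ W ∧ G.tgt f ∈ W := hW ▸ fun f => hσ.src_tgt_mem_component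
  have hq₀ : ∀ j, q j ≠ 0 := fun j => (hq j).ne'
  simp only [Finset.sum_prod_eq_zero_iff_of_nonneg hℓ, mul_eq_zero, hq₀, false_or,
    Finset.mem_filter, Finset.mem_univ, true_and]
  constructor
  · rintro hΓ _ ⟨e, he, rfl⟩ τ hτ
    have hτ' := G.isSpanningTreeOn_cycleReroute hσ hσW (List.mem_map_of_mem he) hτ
    obtain ⟨f, hf, hf0⟩ := hΓ _ ⟨e, he, _, hτ', fun f hf hfe =>
      G.mem_cycleReroute.2 (Or.inr ⟨hf, fun h => hfe (hσ.injOn_src hf he h)⟩), rfl⟩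
    have hfσ : f ∉ σ := fun h => (hpos f h).ne' hf0
    rcases Finset.mem_insert.1 hf with rfl | hf
    · exact absurd he hfσ
    · rcases G.mem_cycleReroute.1 hf with ⟨hfτ, -⟩ | ⟨hf, -⟩
      exacts [⟨f, hfτ, hf0⟩, absurd hf hfσ]
  · rintro hΘ γ ⟨e, he, τ, hτ, -, rfl⟩
    obtain ⟨f, hf, hf0⟩ := hΘ _ ⟨e, he, rfl⟩ τ hτ
    exact ⟨f, Finset.mem_insert_of_mem hf, hf0⟩
end
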